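/- arXiv:2304.08093 — 5 statements merged into one kernel-verified Lean document; each statement's English description precedes it below -/
import Mathlib

section
/- Let Γ be a finite simple graph with vertex set V, |V| = n ≥ 3, and edge set E regarded as a set of 2-element subsets of V. Let K_Γ = (V, {{v} | v ∈ V} ∪ E, ∋) be the formal context whose objects are the vertices, whose attributes are the singleton vertex sets together with the edges, and where a vertex is incident with an attribute iff it is an element of it. Then there exists a surjective scale-measure from K_Γ into the crown scale C_n if and only if Γ has a Hamiltonian cycle. -/
/-- The intent (common attributes) of a set of objects. -/
def intentOf {G M : Type*} (Inc : G → M → Prop) (A : Set G) : Set M :=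
  {m | ∀ g ∈ A, Inc g m}

/-- The extent (common objects) of a set of attributes. -/
def extentOf {G M : Type*} (Inc : G → M → Prop) (B : Set M) : Set G :=
  {g | ∀ m ∈ B, Inc g m}

/-- The set of extents of the formal context `(G, M, Inc)`. -/
def Extents {G M : Type*} (Inc : G → M → Prop) : Set (Set G) :=
  {A | extentOf Inc (intentOf Inc A) = A}

/-- The object closure operator `φ` of a formal context: `φ(A) = A''`. -/
def closureK {G M : Type*} (Inc : G → M → Prop) (A : Set G) : Set G :=
  extentOf Inc (intentOf Inc A)

/-- `σ` is a scale-measure from `(G,M,Inc)` into `(GS,MS,IncS)`. -/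
def IsScaleMeasure {G M GS MS : Type*} (Inc : G → M → Prop) (IncS : GS → MS → Prop)
    (σ : G → GS) : Prop :=
  ∀ A ∈ Extents IncS, σ ⁻¹' A ∈ Extents Inc

/-- `σ` is a full scale-measure from `(G,M,Inc)` into `(GS,MS,IncS)`. -/
def IsFullScaleMeasure {G M GS MS : Type*} (Inc : G → M → Prop) (IncS : GS → MS → Prop)
    (σ : G → GS) : Prop :=
  IsScaleMeasure Inc IncS σ ∧ Extents Inc = (fun A => σ ⁻¹' A) '' Extents IncS

/-- The incidence of the induced subcontext `K[H, M]`. -/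
def subInc {G M : Type*} (Inc : G → M → Prop) (H : Set G) : ↥H → M → Prop :=
  fun h m => Inc h.1 m

/-- `σ : H → GS` is a local full scale-measure from `K` into `S`, i.e. a full
scale-measure from `K[H,M]` into `S`. -/
def IsLocalFullScaleMeasure {G M GS MS : Type*} (Inc : G → M → Prop) (H : Set G)
    (IncS : GS → MS → Prop) (σ : ↥H → GS) : Prop :=
  IsFullScaleMeasure (subInc Inc H) IncS σ

/-- Nominal scale `N_n = ([n],[n],=)` (objects/attributes modelled by `Fin n`). -/
def nominalInc (n : ℕ) : Fin n → Fin n → Prop := fun a b => a = b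

/-- Contranominal scale `B_n = ([n],[n],≠)`. -/
def contranominalInc (n : ℕ) : Fin n → Fin n → Prop := fun a b => a ≠ b

/-- Ordinal scale `O_n = ([n],[n],≤)`. -/
def ordinalInc (n : ℕ) : Fin n → Fin n → Prop := fun a b => a ≤ b

/-- Interordinal scale `I_n = ([n],[n],≤) | ([n],[n],≥)`. -/
def interordinalInc (n : ℕ) : Fin n → Fin n ⊕ Fin n → Prop :=
  fun g m => Sum.elim (fun a => g ≤ a) (fun a => a ≤ g) m

/-- Crown scale `C_n = ([n],[n],J)` with `(a,b) ∈ J` iff `a = b`, `b = a+1`, or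
`(a,b) = (n,1)` (here `Fin n` is `0`-indexed, so `(n,1)` becomes `(n-1,0)`). -/
def crownInc (n : ℕ) : Fin n → Fin n → Prop :=
  fun a b => a = b ∨ (b : ℕ) = (a : ℕ) + 1 ∨ ((a : ℕ) = n - 1 ∧ (b : ℕ) = 0)

/-!
Being a scale-measure only has to be checked on the attribute extents of `C_n`, which are the
pairs `{b - 1, b}`. A surjection `σ : V → [n]` is a bijection, so their preimages are the pairs
`{σ⁻¹ (b - 1), σ⁻¹ b}`, and in `K_Γ` (with at least three vertices) a pair of vertices is an
extent exactly when it is an edge. So `σ` is a scale-measure iff `σ⁻¹` runs around a copy of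
the cycle graph on `n` vertices in `Γ`, i.e. a Hamiltonian cycle.
-/

open Function SimpleGraph

section FormalContext

variable {G M : Type*} {Inc : G → M → Prop}

lemma subset_extentOf_intentOf (A : Set G) : A ⊆ extentOf Inc (intentOf Inc A) :=
  fun _ hg _ hm => hm _ hg

lemma mem_Extents_of_extentOf_intentOf_subset {A : Set G}
    (h : extentOf Inc (intentOf Inc A) ⊆ A) : A ∈ Extents Inc :=
  h.antisymm (subset_extentOf_intentOf A)

lemma extentOf_mem_Extents (B : Set M) : extentOf Inc B ∈ Extents Inc :=
  mem_Extents_of_extentOf_intentOf_subset fun _ hg m hm => hg m fun _ hx => hx m hm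

lemma iInter_mem_Extents {ι : Sort*} {A : ι → Set G} (hA : ∀ i, A i ∈ Extents Inc) :
    ⋂ i, A i ∈ Extents Inc := by
  refine mem_Extents_of_extentOf_intentOf_subset fun g hg => Set.mem_iInter.2 fun i => ?_
  rw [← hA i]
  exact fun m hm => hg m fun x hx => hm x (Set.mem_iInter.1 hx i)

lemma extentOf_eq_biInter (B : Set M) : extentOf Inc B = ⋂ m ∈ B, {g | Inc g m} := by
  ext
  simp [extentOf]

lemma isScaleMeasure_iff_forall_preimage_mem_Extents {GS MS : Type*} {IncS : GS → MS → Prop}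
    {σ : G → GS} :
    IsScaleMeasure Inc IncS σ ↔ ∀ m, σ ⁻¹' {a | IncS a m} ∈ Extents Inc := by
  refine ⟨fun hσ m => ?_, fun h A hA => ?_⟩
  · simpa [extentOf_eq_biInter] using hσ _ (extentOf_mem_Extents {m})
  · rw [← hA, extentOf_eq_biInter, Set.preimage_iInter₂]
    exact iInter_mem_Extents fun m => iInter_mem_Extents fun _ => h m

end FormalContext

lemma crownInc_iff {n : ℕ} [NeZero n] {a b : Fin n} : crownInc n a b ↔ b = a ∨ b = a + 1 := by
  obtain ⟨m, rfl⟩ := Nat.exists_eq_succ_of_ne_zero (NeZero.ne n)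
  have := b.isLt
  simp only [crownInc, Fin.ext_iff, Fin.val_add_one]
  split_ifs with h <;> rw [Fin.val_last] at h <;> omega

section GraphContext

variable {V : Type*} (Γ : SimpleGraph V)

/-- The incidence of `K_Γ`; the attribute `Sum.inl w` stands for the singleton `{w}`. -/
def graphContextInc : V → V ⊕ Γ.edgeSet → Prop :=
  fun v a => Sum.elim (fun w => v = w) (fun e => v ∈ (e : Sym2 V)) a

variable {Γ}

lemma pair_mem_Extents_of_adj {u v : V} (h : Γ.Adj u v) :
    ({u, v} : Set V) ∈ Extents (graphContextInc Γ) := by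
  refine mem_Extents_of_extentOf_intentOf_subset fun g hg => ?_
  have hedge : (Sum.inr ⟨s(u, v), h⟩ : V ⊕ Γ.edgeSet) ∈ intentOf (graphContextInc Γ) {u, v} := by
    rintro x (rfl | rfl)
    exacts [Sym2.mem_mk_left x v, Sym2.mem_mk_right u x]
  exact Sym2.mem_iff.1 (hg _ hedge)

/-- On at least three vertices, a non-edge `{u, v}` has empty intent, so its closure is
everything. -/
lemma adj_of_pair_mem_Extents [Fintype V] (hV : 3 ≤ Fintype.card V) {u v : V} (huv : u ≠ v)
    (h : ({u, v} : Set V) ∈ Extents (graphContextInc Γ)) : Γ.Adj u v := by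
  by_contra hadj
  have huniv : Set.univ = ({u, v} : Set V) := by
    refine Set.eq_univ_of_forall (fun w => ?_) |>.symm
    rw [← h]
    rintro (x | ⟨e, he⟩) hx
    · exact absurd ((hx u (by simp)).trans (hx v (by simp)).symm) huv
    · obtain rfl : e = s(u, v) := (Sym2.mem_and_mem_iff huv).1 ⟨hx u (by simp), hx v (by simp)⟩
      exact absurd he hadj
  have := congrArg Set.ncard huniv
  rw [Set.ncard_univ, Nat.card_eq_fintype_card, Set.ncard_pair huv] at this
  omega

lemma pair_mem_Extents_iff [Fintype V] (hV : 3 ≤ Fintype.card V) {u v : V} (huv : u ≠ v) :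
    ({u, v} : Set V) ∈ Extents (graphContextInc Γ) ↔ Γ.Adj u v :=
  ⟨adj_of_pair_mem_Extents hV huv, pair_mem_Extents_of_adj⟩

lemma isScaleMeasure_crownInc_iff [Fintype V] {n : ℕ} [NeZero n] (hn : 3 ≤ n) (e : V ≃ Fin n) :
    IsScaleMeasure (graphContextInc Γ) (crownInc n) e ↔
      ∀ i, Γ.Adj (e.symm i) (e.symm (i + 1)) := by
  have hV : 3 ≤ Fintype.card V := by rwa [Fintype.card_congr e, Fintype.card_fin]
  have hpre : ∀ b, e ⁻¹' {a | crownInc n a b} = {e.symm (b - 1), e.symm b} := by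
    intro b
    ext x
    simp only [Set.mem_preimage, Set.mem_ofPred_eq, crownInc_iff, Set.mem_insert_iff,
      Set.mem_singleton_iff, Equiv.eq_symm_apply, eq_sub_iff_add_eq]
    tauto
  have hne : ∀ b : Fin n, e.symm (b - 1) ≠ e.symm b :=
    fun b => e.symm.injective.ne (by simp only [ne_eq, sub_eq_self, Fin.one_eq_zero_iff]; omega)
  simp only [isScaleMeasure_iff_forall_preimage_mem_Extents, hpre, pair_mem_Extents_iff hV (hne _)]
  exact (Equiv.addRight (1 : Fin n)).forall_congr_right.symm.trans (by simp)

end GraphContext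

lemma cycleGraph_isContained_iff_exists_injective {V : Type*} {G : SimpleGraph V} {n : ℕ}
    [NeZero n] (hn : 2 ≤ n) :
    cycleGraph n ⊑ G ↔ ∃ τ : Fin n → V, Injective τ ∧ ∀ i, G.Adj (τ i) (τ (i + 1)) := by
  obtain ⟨m, rfl⟩ := Nat.exists_eq_add_of_le' hn
  constructor
  · rintro ⟨f⟩
    refine ⟨f, f.injective, fun i => f.toHom.map_adj ?_⟩
    exact cycleGraph_adj.2 (.inr (add_sub_cancel_left i 1))
  · rintro ⟨τ, hτ, hadj⟩
    refine ⟨⟨⟨τ, fun {a b} hab => ?_⟩, hτ⟩⟩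
    rcases cycleGraph_adj.1 hab with h | h
    · rw [sub_eq_iff_eq_add'.1 h]
      exact (hadj b).symm
    · rw [sub_eq_iff_eq_add'.1 h]
      exact hadj a

lemma exists_isHamiltonianCycle_iff_exists_bijective {V : Type*} [Fintype V] [DecidableEq V]
    {G : SimpleGraph V} {n : ℕ} [NeZero n] (hn : 3 ≤ n) (hcard : Fintype.card V = n) :
    (∃ (v : V) (w : G.Walk v v), w.IsHamiltonianCycle) ↔
      ∃ τ : Fin n → V, Bijective τ ∧ ∀ i, G.Adj (τ i) (τ (i + 1)) := by
  simp only [Walk.isHamiltonianCycle_iff_isCycle_and_length_eq, hcard,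
    ← cycleGraph_isContained_iff (by omega : 2 < n),
    cycleGraph_isContained_iff_exists_injective (by omega : 2 ≤ n),
    Fintype.bijective_iff_injective_and_card, Fintype.card_fin, and_true]

/-- Surjective scale-measure into the crown scale iff Hamiltonian cycle. -/
theorem stmt2 {V : Type*} [Fintype V] [DecidableEq V] (Γ : SimpleGraph V)
    {n : ℕ} (hn : 3 ≤ n) (hcard : Fintype.card V = n) :
    (∃ σ : V → Fin n, Function.Surjective σ ∧
        IsScaleMeasure
          (fun (v : V) (a : V ⊕ Γ.edgeSet) =>
            Sum.elim (fun w => v = w) (fun e => v ∈ (e : Sym2 V)) a)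
          (crownInc n) σ) ↔
      ∃ (v : V) (w : Γ.Walk v v), w.IsHamiltonianCycle := by
  have : NeZero n := ⟨by omega⟩
  rw [exists_isHamiltonianCycle_iff_exists_bijective hn hcard]
  constructor
  · rintro ⟨σ, hσ, hscale⟩
    have hbij : Bijective σ := (Fintype.bijective_iff_surjective_and_card σ).2
      ⟨hσ, by rw [hcard, Fintype.card_fin]⟩
    let e := Equiv.ofBijective σ hbij
    exact ⟨e.symm, e.symm.bijective, (isScaleMeasure_crownInc_iff hn e).1 hscale⟩
  · rintro ⟨τ, hτ, hadj⟩
    let e := (Equiv.ofBijective τ hτ).symm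
    exact ⟨e, e.surjective, (isScaleMeasure_crownInc_iff hn e).2 hadj⟩
end

section
/- Let Γ be a finite simple graph with vertex set V, |V| ≥ 3, and edge set E regarded as a set of 2-element subsets of V. Let K_Γ = (V, {{v} | v ∈ V} ∪ E, ∋) be the formal context whose objects are the vertices, whose attributes are the singleton vertex sets together with the edges, and where a vertex is incident with an attribute iff it is an element of it. Then Ext(K_Γ) = {∅, V} ∪ {{v} | v ∈ V} ∪ E. -/
open Set Order

theorem extents_eq_setOf_isExtent {G M : Type*} (Inc : G → M → Prop) :
    Extents Inc = {A | IsExtent Inc A} :=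
  Set.ext fun _ => isExtent_iff.symm

theorem Order.IsExtent.eq_univ_or_eq_lowerPolar_singleton {α β : Type*} {r : α → β → Prop}
    {s : Set α} (hs : IsExtent r s) (h : (upperPolar r s).Subsingleton) :
    s = univ ∨ ∃ b, s = lowerPolar r {b} := by
  rw [← hs.eq]
  rcases h.eq_empty_or_singleton with h | ⟨b, h⟩
  · exact Or.inl (by rw [h, lowerPolar_empty])
  · exact Or.inr ⟨b, by rw [h]⟩

namespace SimpleGraph

variable {V : Type*} (Γ : SimpleGraph V)

def vertexEdgeIncidence : V → V ⊕ Γ.edgeSet → Prop :=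
  fun v a => Sum.elim (fun w => v = w) (fun e => v ∈ (e : Sym2 V)) a

theorem lowerPolar_vertexEdgeIncidence_inl (w : V) :
    lowerPolar Γ.vertexEdgeIncidence {Sum.inl w} = {w} :=
  Set.ext fun _ => mem_lowerPolar_singleton _

theorem lowerPolar_vertexEdgeIncidence_inr (e : Γ.edgeSet) :
    lowerPolar Γ.vertexEdgeIncidence {Sum.inr e} = {v | v ∈ (e : Sym2 V)} :=
  Set.ext fun _ => mem_lowerPolar_singleton _

theorem lowerPolar_vertexEdgeIncidence_univ [Nontrivial V] :
    lowerPolar Γ.vertexEdgeIncidence univ = ∅ := by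
  obtain ⟨a, b, hab⟩ := exists_pair_ne V
  refine eq_empty_of_forall_notMem fun v hv => hab ?_
  exact (hv (mem_univ (Sum.inl a))).symm.trans (hv (mem_univ (Sum.inl b)))

theorem upperPolar_vertexEdgeIncidence_subsingleton {A : Set V} (hA : A.Nontrivial) :
    (upperPolar Γ.vertexEdgeIncidence A).Subsingleton := by
  obtain ⟨a, ha, b, hb, hab⟩ := hA
  have no_vertex : ∀ w, Sum.inl w ∉ upperPolar Γ.vertexEdgeIncidence A :=
    fun w hw => hab ((hw ha).trans (hw hb).symm)
  rintro (w | e) he m' hm'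
  · exact (no_vertex w he).elim
  rcases m' with w' | e'
  · exact (no_vertex w' hm').elim
  exact congrArg Sum.inr <| Subtype.ext <|
    Sym2.eq_of_ne_mem hab (he ha) (he hb) (hm' ha) (hm' hb)

end SimpleGraph

open SimpleGraph

/-- Extents of the vertex/edge incidence context of a graph. -/
theorem stmt3 {V : Type*} [Fintype V] (Γ : SimpleGraph V)
    (h3 : 3 ≤ Fintype.card V) :
    Extents (fun (v : V) (a : V ⊕ Γ.edgeSet) =>
        Sum.elim (fun w => v = w) (fun e => v ∈ (e : Sym2 V)) a) =
      {∅, Set.univ} ∪ {A | ∃ v : V, A = {v}} ∪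
        {A | ∃ e : Γ.edgeSet, A = {v | v ∈ (e : Sym2 V)}} := by
  have : Nontrivial V := Fintype.one_lt_card_iff_nontrivial.mp (by omega)
  change Extents Γ.vertexEdgeIncidence = _
  rw [extents_eq_setOf_isExtent]
  ext A
  simp only [mem_union, mem_insert_iff, mem_singleton_iff]
  constructor
  · intro hA
    rcases A.subsingleton_or_nontrivial with hsub | hnt
    · rcases hsub.eq_empty_or_singleton with rfl | ⟨v, rfl⟩
      · exact Or.inl (Or.inl (Or.inl rfl))
      · exact Or.inl (Or.inr ⟨v, rfl⟩)
    · rcases hA.eq_univ_or_eq_lowerPolar_singleton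
        (Γ.upperPolar_vertexEdgeIncidence_subsingleton hnt) with rfl | ⟨w | e, rfl⟩
      · exact Or.inl (Or.inl (Or.inr rfl))
      · exact Or.inl (Or.inr ⟨w, Γ.lowerPolar_vertexEdgeIncidence_inl w⟩)
      · exact Or.inr ⟨e, Γ.lowerPolar_vertexEdgeIncidence_inr e⟩
  · rintro (((rfl | rfl) | ⟨v, rfl⟩) | ⟨e, rfl⟩)
    · exact Γ.lowerPolar_vertexEdgeIncidence_univ ▸ isExtent_lowerPolar
    · exact IsExtent.univ
    · exact Γ.lowerPolar_vertexEdgeIncidence_inl v ▸ isExtent_lowerPolar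
    · exact Γ.lowerPolar_vertexEdgeIncidence_inr e ▸ isExtent_lowerPolar
end

section
/- Let K = (G, M, I) be a finite formal context and n ≥ 1. There exists a surjective full scale-measure from K into the ordinal scale O_n if and only if Ext(K) is totally ordered by inclusion, ∅ ∉ Ext(K), and |Ext(K)| = n. -/
/-! The extents of `O_n` are the down-sets `Iic k`, so a full scale-measure `σ` into `O_n` makes
`Ext(K)` the range of `k ↦ σ⁻¹(Iic k)`, and `σ` is surjective exactly when this map is strictly
monotone with nonempty values; this gives a chain of `n` nonempty extents. Conversely, enumerate a
chain of `n` extents increasingly as `e 0 ⊂ ⋯ ⊂ e (n-1)` and send each object `g` to the index of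
its object extent `{g}''`: as `{g}'' ⊆ A ↔ g ∈ A` for every extent `A`, the preimage of `Iic k`
is `e k`. -/

open Set Order Function

lemma mem_extents_iff_isExtent {G M : Type*} {Inc : G → M → Prop} {A : Set G} :
    A ∈ Extents Inc ↔ IsExtent Inc A :=
  isExtent_iff.symm

lemma Order.IsExtent.lowerPolar_upperPolar_singleton_subset_iff {α β : Type*}
    {r : α → β → Prop} {s : Set α} (hs : IsExtent r s) {a : α} :
    lowerPolar r (upperPolar r {a}) ⊆ s ↔ a ∈ s :=
  ⟨fun h => h (subset_lowerPolar_upperPolar r {a} rfl),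
    fun h => hs.lowerPolar_upperPolar_subset (singleton_subset_iff.2 h)⟩

lemma range_lowerBounds_eq_range_Iic {α : Type*} [LinearOrder α] [OrderTop α] [Finite α] :
    range (lowerBounds : Set α → Set α) = range Iic := by
  refine Subset.antisymm ?_ (range_subset_iff.2 fun a => ⟨Ici a, lowerBounds_Ici⟩)
  rintro _ ⟨B, rfl⟩
  rcases B.eq_empty_or_nonempty with rfl | hB
  · exact ⟨⊤, by rw [Iic_top, lowerBounds_empty]⟩
  · obtain ⟨a, ha, hmin⟩ := exists_min_image B id B.toFinite hB
    exact ⟨a, (IsLeast.lowerBounds_eq ⟨ha, hmin⟩).symm⟩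

lemma extents_ordinalInc (n : ℕ) [NeZero n] :
    Extents (ordinalInc n) = range Iic := by
  ext A
  rw [mem_extents_iff_isExtent, ← range_lowerBounds_eq_range_Iic]
  rfl

lemma isFullScaleMeasure_ordinalInc_iff {G M : Type*} (Inc : G → M → Prop) {n : ℕ} [NeZero n]
    {σ : G → Fin n} :
    IsFullScaleMeasure Inc (ordinalInc n) σ ↔ Extents Inc = range fun k => σ ⁻¹' Iic k := by
  rw [IsFullScaleMeasure, IsScaleMeasure, extents_ordinalInc, ← range_comp, forall_mem_range]
  exact ⟨And.right, fun h => ⟨fun k => h ▸ mem_range_self k, h⟩⟩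

lemma surjective_iff_strictMono_preimage_Iic {G : Type*} {n : ℕ} {σ : G → Fin n} :
    Surjective σ ↔ StrictMono (fun k => σ ⁻¹' Iic k) ∧ ∀ k, (σ ⁻¹' Iic k).Nonempty := by
  refine ⟨fun hσ => ⟨fun k j hkj => ?_, fun k => ?_⟩, fun ⟨hmono, hne⟩ k => ?_⟩
  · obtain ⟨g, rfl⟩ := hσ j
    exact ssubset_of_subset_not_subset (preimage_mono (Iic_subset_Iic.2 hkj.le))
      fun h => hkj.not_ge (h (le_refl (σ g)))
  · obtain ⟨g, rfl⟩ := hσ k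
    exact ⟨g, le_refl (σ g)⟩
  · by_cases hk : (k : ℕ) = 0
    · obtain ⟨g, hg⟩ := hne k
      exact ⟨g, Fin.ext (by have : (σ g : ℕ) ≤ k := hg; omega)⟩
    · let j : Fin n := ⟨k - 1, by omega⟩
      obtain ⟨g, hgk, hgj⟩ := exists_of_ssubset (hmono (show j < k by simp [j, Fin.lt_def]; omega))
      refine ⟨g, Fin.ext ?_⟩
      have hle : (σ g : ℕ) ≤ k := hgk
      have hgt : ¬ (σ g : ℕ) ≤ k - 1 := hgj
      omega

lemma IsChain.exists_strictMono_fin {α : Type*} [PartialOrder α] {s : Set α}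
    (hs : IsChain (· ≤ ·) s) (hfin : s.Finite) {n : ℕ} (hn : s.ncard = n) :
    ∃ e : Fin n → α, StrictMono e ∧ range e = s := by
  classical
  let := hs.linearOrder
  have := hfin.fintype
  let f := Fintype.orderIsoFinOfCardEq s (k := n)
    (by rw [← hn, ← Nat.card_coe_set_eq, Nat.card_eq_fintype_card])
  refine ⟨Subtype.val ∘ f, Subtype.strictMono_coe _ |>.comp f.strictMono, ?_⟩
  rw [range_comp, f.surjective.range_eq, image_univ, Subtype.range_coe]

lemma exists_preimage_Iic_eq_of_range_eq_extents {G M ι : Type*} [LinearOrder ι]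
    {Inc : G → M → Prop} {e : ι → Set G} (he : StrictMono e) (hrange : range e = Extents Inc) :
    ∃ σ : G → ι, ∀ k, σ ⁻¹' Iic k = e k := by
  have hext : ∀ k, IsExtent Inc (e k) := fun k =>
    mem_extents_iff_isExtent.1 (hrange ▸ mem_range_self k)
  have hobj : ∀ g, ∃ k, e k = lowerPolar Inc (upperPolar Inc {g}) := fun g => by
    rw [← mem_range, hrange, mem_extents_iff_isExtent]
    exact isExtent_lowerPolar
  choose σ hσ using hobj
  refine ⟨σ, fun k => ext fun g => ?_⟩
  rw [mem_preimage, mem_Iic, ← he.le_iff_le, hσ]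
  exact (hext k).lowerPolar_upperPolar_singleton_subset_iff

theorem stmt7_general {G M : Type*} [Finite G] (Inc : G → M → Prop)
    {n : ℕ} (hn : 1 ≤ n) :
    (∃ σ : G → Fin n, Function.Surjective σ ∧ IsFullScaleMeasure Inc (ordinalInc n) σ) ↔
      (IsChain (· ⊆ ·) (Extents Inc) ∧ ∅ ∉ Extents Inc ∧ (Extents Inc).ncard = n) := by
  have : NeZero n := ⟨by omega⟩
  constructor
  · rintro ⟨σ, hsurj, hfull⟩
    obtain ⟨hmono, hne⟩ := surjective_iff_strictMono_preimage_Iic.1 hsurj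
    rw [(isFullScaleMeasure_ordinalInc_iff Inc).1 hfull]
    exact ⟨hmono.monotone.isChain_range, fun ⟨k, hk⟩ => (hne k).ne_empty hk,
      by rw [ncard_range_of_injective hmono.injective, Nat.card_fin]⟩
  · rintro ⟨hchain, hempty, hcard⟩
    obtain ⟨e, he, hrange⟩ := IsChain.exists_strictMono_fin hchain (toFinite _) hcard
    obtain ⟨σ, hσ⟩ := exists_preimage_Iic_eq_of_range_eq_extents he hrange
    have hσe : (fun k => σ ⁻¹' Iic k) = e := funext hσ
    refine ⟨σ, surjective_iff_strictMono_preimage_Iic.2 ⟨hσe ▸ he, fun k => ?_⟩,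
      (isFullScaleMeasure_ordinalInc_iff Inc).2 (hσe ▸ hrange.symm)⟩
    rw [hσ, nonempty_iff_ne_empty]
    intro h
    exact hempty (h ▸ hrange ▸ mem_range_self k)

/-- Characterisation of surjective full scale-measures into the ordinal scale. -/
theorem stmt7 {G M : Type*} [Finite G] [Finite M] (Inc : G → M → Prop)
    {n : ℕ} (hn : 1 ≤ n) :
    (∃ σ : G → Fin n, Function.Surjective σ ∧ IsFullScaleMeasure Inc (ordinalInc n) σ) ↔
      (IsChain (· ⊆ ·) (Extents Inc) ∧ ∅ ∉ Extents Inc ∧ (Extents Inc).ncard = n) :=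
  stmt7_general Inc hn
end

section
/- Let n ≥ 2. A permutation π of [n] satisfies {π⁻¹(A) | A ∈ Ext(I_n)} = Ext(I_n), where I_n is the interordinal scale, if and only if π is the identity or π(i) = n + 1 − i for all i ∈ [n]. -/
/-!
For `n ≥ 2` the extents of `I_n` are exactly the order-convex subsets of `[n]`: the closure of
`A` consists of the points lying below every upper bound and above every lower bound of `A`,
which is `[min A, max A]` for nonempty `A`, while `∅` is closed because no point lies below and
above everything. A permutation preserving the extents therefore maps intervals to intervals,
and by a discrete intermediate value argument such an injection is strictly monotone or
strictly antitone, hence the identity or the reversal.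
-/

open Set Function

section DiscreteIntermediateValue

variable {α β : Type*} [LinearOrder α] [LinearOrder β] {f : α → β}

theorem mem_Icc_of_apply_mem_uIcc (hf : Injective f)
    (hI : ∀ s : Set α, s.OrdConnected → (f '' s).OrdConnected) {a b c : α} (hab : a ≤ b)
    (hc : f c ∈ uIcc (f a) (f b)) : c ∈ Icc a b := by
  obtain ⟨u, hu, hfu⟩ := (hI _ ordConnected_Icc).uIcc_subset
    (mem_image_of_mem f (left_mem_Icc.2 hab)) (mem_image_of_mem f (right_mem_Icc.2 hab)) hc
  exact hf hfu ▸ hu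

theorem strictMono_of_ordConnected_image [BoundedOrder α] (hf : Injective f)
    (hI : ∀ s : Set α, s.OrdConnected → (f '' s).OrdConnected) (hbt : f ⊥ ≤ f ⊤) :
    StrictMono f := by
  intro a b hab
  by_contra! hba
  replace hba : f b < f a := hba.lt_of_ne (hf.ne hab.ne')
  have key : ∀ {x y z}, x ≤ y → f z ∈ uIcc (f x) (f y) → z ∈ Icc x y :=
    mem_Icc_of_apply_mem_uIcc hf hI
  rcases le_or_gt (f a) (f ⊥) with ha | ha
  · exact hab.not_ge (key le_top (mem_uIcc.2 (.inl ⟨hba.le, ha.trans hbt⟩))).1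
  rcases lt_or_ge (f ⊥) (f b) with hb | hb
  · exact hab.not_ge (key bot_le (mem_uIcc.2 (.inl ⟨hb.le, hba.le⟩))).2
  · have := le_bot_iff.1 (key hab.le (mem_uIcc.2 (.inr ⟨hb, ha.le⟩))).1
    exact ha.ne (this ▸ rfl)

theorem strictMono_or_strictAnti_of_ordConnected_image [BoundedOrder α] (hf : Injective f)
    (hI : ∀ s : Set α, s.OrdConnected → (f '' s).OrdConnected) :
    StrictMono f ∨ StrictAnti f :=
  (le_total (f ⊥) (f ⊤)).imp (strictMono_of_ordConnected_image hf hI)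
    (strictMono_of_ordConnected_image (β := βᵒᵈ) hf fun s hs => (hI s hs).dual)

end DiscreteIntermediateValue

theorem image_mem_of_preimage_image_eq {α β : Type*} {f : α → β} (hf : Surjective f)
    {S : Set (Set β)} {T : Set (Set α)} (h : (fun A => f ⁻¹' A) '' S = T) {s : Set α}
    (hs : s ∈ T) : f '' s ∈ S := by
  obtain ⟨A, hA, rfl⟩ := h ▸ hs
  rwa [image_preimage_eq A hf]

theorem Function.Involutive.image_eq_self_of_mapsTo {α : Type*} {φ : α → α}
    (hφ : Involutive φ) {S : Set α} (hS : MapsTo φ S S) : φ '' S = S :=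
  hS.image_subset.antisymm fun s hs => ⟨φ s, hS hs, hφ s⟩

theorem ordConnected_lowerBounds_inter_upperBounds {α : Type*} [Preorder α] (s t : Set α) :
    (lowerBounds s ∩ upperBounds t).OrdConnected :=
  ⟨fun _ hx _ hy _ hz => ⟨fun _ ha => hz.2.trans (hy.1 ha), fun _ ha => (hx.2 ha).trans hz.1⟩⟩

theorem Set.OrdConnected.lowerBounds_upperBounds_inter_eq {α : Type*} [LinearOrder α] [Finite α]
    {A : Set α} (hA : A.OrdConnected) (hne : A.Nonempty) :
    lowerBounds (upperBounds A) ∩ upperBounds (lowerBounds A) = A := by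
  obtain ⟨M, hM, hMmax⟩ := A.exists_max_image id A.toFinite hne
  obtain ⟨m, hm, hmmin⟩ := A.exists_min_image id A.toFinite hne
  exact subset_antisymm (fun g hg => hA.out hm hM ⟨hg.2 hmmin, hg.1 hMmax⟩) fun g hg =>
    ⟨subset_lowerBounds_upperBounds A hg, subset_upperBounds_lowerBounds A hg⟩

theorem lowerBounds_univ_inter_upperBounds_univ {α : Type*} [PartialOrder α] [Nontrivial α] :
    lowerBounds univ ∩ upperBounds (univ : Set α) = ∅ :=
  eq_empty_iff_forall_notMem.2 fun g hg =>
    (exists_ne g).elim fun _ hx => hx (le_antisymm (hg.2 trivial) (hg.1 trivial))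

theorem closureK_interordinalInc {n : ℕ} (A : Set (Fin n)) :
    closureK (interordinalInc n) A = lowerBounds (upperBounds A) ∩ upperBounds (lowerBounds A) := by
  ext g
  simp [closureK, extentOf, intentOf, interordinalInc, lowerBounds, upperBounds]

theorem extents_interordinalInc {n : ℕ} (hn : 2 ≤ n) :
    Extents (interordinalInc n) = {A | A.OrdConnected} := by
  have : Nontrivial (Fin n) := Fin.nontrivial_iff_two_le.2 hn
  ext A
  change closureK _ A = A ↔ _
  rw [closureK_interordinalInc]
  refine ⟨fun h => h ▸ ordConnected_lowerBounds_inter_upperBounds _ _, fun hA => ?_⟩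
  rcases A.eq_empty_or_nonempty with rfl | hne
  · simpa using lowerBounds_univ_inter_upperBounds_univ
  · exact hA.lowerBounds_upperBounds_inter_eq hne

/-- Permutations preserving the extents of the interordinal scale. -/
theorem stmt9 {n : ℕ} (hn : 2 ≤ n) (π : Equiv.Perm (Fin n)) :
    (fun A => ⇑π ⁻¹' A) '' Extents (interordinalInc n) = Extents (interordinalInc n) ↔
      ((∀ i, π i = i) ∨ (∀ i : Fin n, π i = i.rev)) := by
  rw [extents_interordinalInc hn]
  constructor
  · intro h
    have : NeZero n := ⟨by omega⟩
    rcases strictMono_or_strictAnti_of_ordConnected_image π.injective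
      fun s hs => image_mem_of_preimage_image_eq π.surjective h hs with hmono | hanti
    · exact .inl fun i => hmono.apply_eq
    · exact .inr fun i => Fin.rev_eq_iff.1 (Fin.rev_strictAnti.comp hanti).apply_eq
  · rintro (h | h)
    · rw [show ⇑π = id from funext h]
      simp
    · rw [show ⇑π = Fin.rev from funext h]
      exact Fin.rev_involutive.preimage.image_eq_self_of_mapsTo fun s hs =>
        hs.preimage_anti Fin.rev_anti
end

section
/- Let K = (G, M, I) be a finite formal context and H ⊆ G with |H| = n ≥ 2. If there exists a bijective local full scale-measure σ : H → [n] from K into the nominal scale N_n, then for every H' ⊆ H with |H'| = k ≥ 2 there exists a bijective local full scale-measure from K (with domain H') into the nominal scale N_k. -/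
open Set Function Order

section ScaleMeasures

variable {X G M : Type*}

theorem extents_eq_range_lowerPolar (Inc : G → M → Prop) :
    Extents Inc = range (lowerPolar Inc) :=
  Set.ext fun _ => isExtent_iff.symm

theorem extents_comp (Inc : G → M → Prop) (f : X → G) :
    Extents (fun x m => Inc (f x) m) = (f ⁻¹' ·) '' Extents Inc := by
  rw [extents_eq_range_lowerPolar, extents_eq_range_lowerPolar, ← range_comp]
  rfl

theorem extents_subInc_of_subset (Inc : G → M → Prop) {H' H : Set G} (hH' : H' ⊆ H) :
    Extents (subInc Inc H') = (inclusion hH' ⁻¹' ·) '' Extents (subInc Inc H) :=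
  extents_comp (subInc Inc H) (inclusion hH')

theorem isFullScaleMeasure_iff {GS MS : Type*} {Inc : G → M → Prop} {IncS : GS → MS → Prop}
    {σ : G → GS} :
    IsFullScaleMeasure Inc IncS σ ↔ Extents Inc = (σ ⁻¹' ·) '' Extents IncS :=
  ⟨And.right, fun h => ⟨fun A hA => h ▸ ⟨A, hA, rfl⟩, h⟩⟩

end ScaleMeasures

section NominalExtents

def nominalExtents (X : Type*) : Set (Set X) :=
  {A | A.Subsingleton ∨ A = univ}

variable {X Y : Type*}

theorem extents_eq_nominalExtents_of_nontrivial [Nontrivial X] :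
    Extents (fun a b : X => a = b) = nominalExtents X := by
  rw [extents_eq_range_lowerPolar]
  ext A
  constructor
  · rintro ⟨t, rfl⟩
    rcases t.eq_empty_or_nonempty with rfl | ⟨b, hb⟩
    · exact Or.inr (lowerPolar_empty _)
    · exact Or.inl fun x hx y hy => (hx hb).trans (hy hb).symm
  · rintro (hA | rfl)
    · rcases hA.eq_empty_or_singleton with rfl | ⟨a, rfl⟩
      · obtain ⟨a, b, hab⟩ := exists_pair_ne X
        refine ⟨{a, b}, eq_empty_of_forall_notMem fun x hx => hab ?_⟩
        exact (hx (mem_insert a {b})).symm.trans (hx (mem_insert_of_mem a rfl))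
      · exact ⟨{a}, by ext; simp [lowerPolar]⟩
    · exact ⟨∅, lowerPolar_empty _⟩

theorem extents_nominalInc {n : ℕ} (hn : 2 ≤ n) :
    Extents (nominalInc n) = nominalExtents (Fin n) :=
  haveI := Fin.nontrivial_iff_two_le.2 hn
  extents_eq_nominalExtents_of_nontrivial

theorem image_preimage_nominalExtents {f : X → Y} (hf : Injective f) :
    (f ⁻¹' ·) '' nominalExtents Y = nominalExtents X := by
  ext A
  constructor
  · rintro ⟨B, hB | rfl, rfl⟩
    · exact Or.inl (hB.preimage hf)
    · exact Or.inr preimage_univ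
  · rintro (hA | rfl)
    · exact ⟨f '' A, Or.inl (hA.image f), hf.preimage_image A⟩
    · exact ⟨univ, Or.inr rfl, preimage_univ⟩

end NominalExtents

theorem stmt17_general {G M : Type*} (Inc : G → M → Prop)
    (H : Set G) {n : ℕ} (hn : 2 ≤ n)
    (σ : ↥H → Fin n) (hb : Function.Bijective σ)
    (h : IsLocalFullScaleMeasure Inc H (nominalInc n) σ) :
    ∀ H' ⊆ H, ∀ k : ℕ, 2 ≤ k → H'.ncard = k →
      ∃ τ : ↥H' → Fin k, Function.Bijective τ ∧
        IsLocalFullScaleMeasure Inc H' (nominalInc k) τ := by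
  intro H' hH' k hk hcard
  have extents_H : Extents (subInc Inc H) = nominalExtents H := by
    rw [isFullScaleMeasure_iff.1 h, extents_nominalInc hn,
      image_preimage_nominalExtents hb.injective]
  have extents_H' : Extents (subInc Inc H') = nominalExtents H' := by
    rw [extents_subInc_of_subset Inc hH', extents_H,
      image_preimage_nominalExtents (inclusion_injective hH')]
  have card_H' : Nat.card H' = k := (Nat.card_coe_set_eq H').trans hcard
  have : Finite H' := Nat.finite_of_card_ne_zero (by omega)
  let τ := Finite.equivFinOfCardEq card_H'
  refine ⟨τ, τ.bijective, isFullScaleMeasure_iff.2 ?_⟩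
  rw [extents_H', extents_nominalInc hk, image_preimage_nominalExtents τ.injective]

/-- Heredity of local full scale-measures into nominal scales. -/
theorem stmt17 {G M : Type*} [Finite G] [Finite M] (Inc : G → M → Prop)
    (H : Set G) {n : ℕ} (hn : 2 ≤ n) (hcard : H.ncard = n)
    (σ : ↥H → Fin n) (hb : Function.Bijective σ)
    (h : IsLocalFullScaleMeasure Inc H (nominalInc n) σ) :
    ∀ H' ⊆ H, ∀ k : ℕ, 2 ≤ k → H'.ncard = k →
      ∃ τ : ↥H' → Fin k, Function.Bijective τ ∧
        IsLocalFullScaleMeasure Inc H' (nominalInc k) τ :=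
  stmt17_general Inc H hn σ hb h
end
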